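/- Let four circles in the Euclidean plane have centers c₁, c₂, c₃, c₄ and radii r₁, r₂, r₃, r₄ > 0, and suppose they are pairwise externally tangent, i.e. dist(c_i, c_j) = r_i + r_j for all i ≠ j. Then the curvatures κ_i = 1/r_i satisfy 2(κ₁² + κ₂² + κ₃² + κ₄²) = (κ₁ + κ₂ + κ₃ + κ₄)². -/

import Mathlib

/-!
The centres of four circles in the plane span no volume, so the Cayley–Menger determinant of their
squared distances vanishes. For pairwise externally tangent circles these squared distances are
`(rᵢ + rⱼ)²`, and the determinant then factors as `32 (r₁r₂r₃r₄)²` times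
`(∑ κᵢ)² - 2 ∑ κᵢ²`.
-/

open Finset

/-- `288 V²` for a tetrahedron whose edge `ij` has squared length `D i j` (`i < j`): the expanded
Cayley–Menger determinant. The first three terms pair opposite edges, the last one runs over
the faces. -/
def cayleyMenger₄ (D : Fin 4 → Fin 4 → ℝ) : ℝ :=
  2 * (D 0 1 * D 2 3 * (D 0 2 + D 0 3 + D 1 2 + D 1 3 - D 0 1 - D 2 3)
    + D 0 2 * D 1 3 * (D 0 1 + D 0 3 + D 1 2 + D 2 3 - D 0 2 - D 1 3)
    + D 0 3 * D 1 2 * (D 0 1 + D 0 2 + D 1 3 + D 2 3 - D 0 3 - D 1 2)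
    - (D 0 1 * D 0 2 * D 1 2 + D 0 1 * D 0 3 * D 1 3 + D 0 2 * D 0 3 * D 2 3
      + D 1 2 * D 1 3 * D 2 3))

theorem cayleyMenger₄_congr {D D' : Fin 4 → Fin 4 → ℝ} (h : ∀ i j, i ≠ j → D i j = D' i j) :
    cayleyMenger₄ D = cayleyMenger₄ D' := by
  simp only [cayleyMenger₄, h 0 1 (by decide), h 0 2 (by decide), h 0 3 (by decide),
    h 1 2 (by decide), h 1 3 (by decide), h 2 3 (by decide)]

theorem EuclideanSpace.dist_sq_fin_two (p q : EuclideanSpace ℝ (Fin 2)) :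
    dist p q ^ 2 = (p 0 - q 0) ^ 2 + (p 1 - q 1) ^ 2 := by
  simp only [EuclideanSpace.dist_sq_eq, Fin.sum_univ_two, Real.dist_eq, sq_abs]

theorem cayleyMenger₄_dist_sq_eq_zero (p : Fin 4 → EuclideanSpace ℝ (Fin 2)) :
    cayleyMenger₄ (fun i j => dist (p i) (p j) ^ 2) = 0 := by
  simp only [cayleyMenger₄, EuclideanSpace.dist_sq_fin_two]
  ring

theorem cayleyMenger₄_add_sq {r : Fin 4 → ℝ} (hr : ∀ i, r i ≠ 0) :
    cayleyMenger₄ (fun i j => (r i + r j) ^ 2) =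
      32 * (∏ i, r i) ^ 2 * ((∑ i, 1 / r i) ^ 2 - 2 * ∑ i, (1 / r i) ^ 2) := by
  have := hr 0; have := hr 1; have := hr 2; have := hr 3
  simp only [cayleyMenger₄, Fin.prod_univ_four, Fin.sum_univ_four]
  field_simp
  ring

/-- Descartes circle theorem: four pairwise externally tangent circles in the
plane, with centers c_i and radii r_i, have curvatures κ_i = 1/r_i satisfying
2(κ₁² + κ₂² + κ₃² + κ₄²) = (κ₁ + κ₂ + κ₃ + κ₄)². -/
theorem descartes_circle_theorem
    (c : Fin 4 → EuclideanSpace ℝ (Fin 2)) (r : Fin 4 → ℝ)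
    (hr : ∀ i, 0 < r i)
    (htangent : ∀ i j, i ≠ j → dist (c i) (c j) = r i + r j) :
    2 * ((1 / r 0) ^ 2 + (1 / r 1) ^ 2 + (1 / r 2) ^ 2 + (1 / r 3) ^ 2) =
      (1 / r 0 + 1 / r 1 + 1 / r 2 + 1 / r 3) ^ 2 := by
  have hcm : cayleyMenger₄ (fun i j => (r i + r j) ^ 2) = 0 := by
    rw [← cayleyMenger₄_dist_sq_eq_zero c]
    exact cayleyMenger₄_congr fun i j hij => by rw [htangent i j hij]
  have hprod : 32 * (∏ i, r i) ^ 2 ≠ 0 :=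
    mul_ne_zero (by norm_num) (pow_ne_zero 2 (prod_pos fun i _ => hr i).ne')
  rw [cayleyMenger₄_add_sq fun i => (hr i).ne', mul_eq_zero, or_iff_right hprod,
    Fin.sum_univ_four, Fin.sum_univ_four, sub_eq_zero] at hcm
  exact hcm.symm
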